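/- arXiv:1809.08944 — 2 statements merged into one kernel-verified Lean document; each statement's English description precedes it below -/
import Mathlib

section
/- Let G be a finite connected graph with radius r and diameter d such that d ≤ 2r - 2. Then G contains a cycle of length at least 4r - 2d, i.e., the circumference of G satisfies c(G) ≥ 4r - 2d. -/
/-!
Let `z` be a centre, `x` a vertex at distance `r` from `z`, and `c` a vertex closest to `z` among
the vertices other than `z` lying on every `z`–`x` walk (possibly `c = x`). No vertex separates
`z` from `c`, so by Menger's theorem `z` and `c` lie on a common cycle, of length at least
`2 d(z,c)`. A vertex `y` farthest from `c` has `d(c,y) ≥ r ≥ d(z,y)`, so some `z`–`y` walk avoids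
`c`; hence `c` separates `x` from `y`, and `d ≥ d(x,y) = d(x,c) + d(c,y) ≥ (r - d(z,c)) + r`,
that is `d(z,c) ≥ 2r - d`.
-/

open SimpleGraph

/-- The eccentricity of a vertex: the maximum distance to any other vertex. -/
noncomputable def ecc {V : Type*} [Fintype V] (G : SimpleGraph V) (u : V) : ℕ :=
  Finset.univ.sup (G.dist u)

/-- The radius of a graph: the minimum eccentricity. -/
noncomputable def rad {V : Type*} [Fintype V] (G : SimpleGraph V) : ℕ :=
  sInf (Set.range (ecc G))

/-- The diameter of a graph: the maximum eccentricity. -/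
noncomputable def diamG {V : Type*} [Fintype V] (G : SimpleGraph V) : ℕ :=
  Finset.univ.sup (ecc G)

/-- A cut-vertex: a vertex whose removal disconnects the graph. -/
def IsCutVertex {V : Type*} (G : SimpleGraph V) (v : V) : Prop :=
  ¬ (G.induce {w | w ≠ v}).Connected

namespace SimpleGraph

variable {V : Type*} {G : SimpleGraph V}

def Separates (G : SimpleGraph V) (c p q : V) : Prop :=
  ∀ W : G.Walk p q, c ∈ W.support

def HasInternallyDisjointPaths (G : SimpleGraph V) (p q : V) : Prop :=
  ∃ P₁ P₂ : G.Walk p q, P₁.IsPath ∧ P₂.IsPath ∧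
    ∀ x ∈ P₁.support, x ∈ P₂.support → x = p ∨ x = q

namespace Walk

theorem IsPath.append_of_forall_mem {u v w : V} {P : G.Walk u v} {Q : G.Walk v w}
    (hP : P.IsPath) (hQ : Q.IsPath) (h : ∀ x ∈ P.support, x ∈ Q.support → x = v) :
    (P.append Q).IsPath := by
  apply IsPath.mk'
  rw [support_append]
  have hQ' := hQ.support_nodup
  rw [← cons_tail_support Q, List.nodup_cons] at hQ'
  refine hP.support_nodup.append hQ'.2 fun x hxP hxQ => ?_
  obtain rfl := h x hxP (List.mem_of_mem_tail hxQ)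
  exact hQ'.1 hxQ

theorem notMem_support_of_length_lt_dist {u v w : V} (W : G.Walk u v)
    (hW : W.length < G.dist u w) : w ∉ W.support := by
  classical
  intro hw
  have := dist_le (W.takeUntil w hw)
  have := W.length_takeUntil_le_length hw
  omega

theorem exists_walk_to_first_mem {u v : V} (W : G.Walk u v) (S : Set V) (hv : v ∈ S) :
    ∃ w ∈ S, ∃ U : G.Walk u w, ∀ x ∈ U.support, x ∈ W.support ∧ (x ∈ S → x = w) := by
  induction W with
  | nil => exact ⟨_, hv, nil, by simp⟩
  | @cons u _ _ h W ih =>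
    by_cases hu : u ∈ S
    · exact ⟨u, hu, nil, by simp⟩
    · obtain ⟨w, hw, U, hU⟩ := ih hv
      refine ⟨w, hw, cons h U, fun x hx => ?_⟩
      rw [support_cons, List.mem_cons] at hx
      rcases hx with rfl | hx
      · exact ⟨start_mem_support _, fun hxS => absurd hxS hu⟩
      · exact ⟨List.mem_cons_of_mem _ (hU x hx).1, (hU x hx).2⟩

end Walk

theorem exists_adj_dist_eq_of_dist_eq_succ {p q : V} {ℓ : ℕ} (h : G.dist p q = ℓ + 1) :
    ∃ q', G.Adj q' q ∧ G.dist p q' = ℓ := by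
  rw [dist_comm] at h
  obtain ⟨W, hW⟩ :=
    (Reachable.of_dist_ne_zero (by omega : G.dist q p ≠ 0)).exists_walk_length_eq_dist
  cases W with
  | nil => simp at h
  | @cons _ q' _ hadj W =>
    refine ⟨q', hadj.symm, ?_⟩
    have hle := dist_le W
    have htri := hadj.reachable.dist_triangle_left p
    rw [dist_eq_one_iff_adj.mpr hadj] at htri
    simp only [Walk.length_cons] at hW
    rw [dist_comm]
    omega

namespace Separates

theorem reachable_left {c p q : V} (h : G.Separates c p q) (hpq : G.Reachable p q) :
    G.Reachable p c := by
  classical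
  obtain ⟨W⟩ := hpq
  exact ⟨W.takeUntil c (h W)⟩

theorem dist_eq_add {c p q : V} (h : G.Separates c p q) (hpq : G.Reachable p q) :
    G.dist p q = G.dist p c + G.dist c q := by
  classical
  obtain ⟨W, hW⟩ := hpq.exists_walk_length_eq_dist
  have hc := h W
  have hsplit := congrArg Walk.length (W.take_spec hc)
  rw [Walk.length_append] at hsplit
  have := dist_le (W.takeUntil c hc)
  have := dist_le (W.dropUntil c hc)
  have := (h.reachable_left hpq).dist_triangle_left q
  omega

theorem trans_left {c c' p q : V} (h : G.Separates c p q) (h' : G.Separates c' p c) :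
    G.Separates c' p q := by
  classical
  intro W
  exact W.support_takeUntil_subset_support (h W) (h' _)

theorem right_of_not_separates {c p q r : V} (h : G.Separates c p q)
    (hr : ¬ G.Separates c p r) : G.Separates c r q := by
  intro W
  obtain ⟨W₀, hW₀⟩ := not_forall.mp hr
  by_contra hW
  have := h (W₀.append W)
  rw [Walk.mem_support_append_iff] at this
  tauto

end Separates

/-- `q` itself separates `p` from `q`; take a separator closest to `p`. -/
theorem exists_separates_forall_not_separates {p q : V} (hpq : G.Reachable p q) (hne : p ≠ q) :
    ∃ c, c ≠ p ∧ G.Separates c p q ∧ ∀ c', c' ≠ p → c' ≠ c → ¬ G.Separates c' p c := by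
  let S := {c | c ≠ p ∧ G.Separates c p q}
  have hqS : q ∈ S := ⟨hne.symm, fun W => W.end_mem_support⟩
  set c := Function.argminOn (G.dist p) S ⟨q, hqS⟩
  obtain ⟨hcp, hc⟩ : c ∈ S := Function.argminOn_mem _ _ _
  refine ⟨c, hcp, hc, fun c' hc'p hc'c hc' => ?_⟩
  have hpc := hc.reachable_left hpq
  have hlt : G.dist p c' < G.dist p c := by
    have := hc'.dist_eq_add hpc
    have := ((hc'.reachable_left hpc).symm.trans hpc).pos_dist_of_ne hc'c
    omega
  exact Function.not_lt_argminOn _ S (show c' ∈ S from ⟨hc'p, hc.trans_left hc'⟩) hlt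

/-- Whitney's fan step: cut `P₁` at `w` and reroute it along `U`, extend `P₂` by the edge `q'q`. -/
theorem HasInternallyDisjointPaths.of_graft {p q' q w : V} {P₁ P₂ : G.Walk p q'}
    (h₁ : P₁.IsPath) (h₂ : P₂.IsPath)
    (hdisj : ∀ x ∈ P₁.support, x ∈ P₂.support → x = p ∨ x = q') (hadj : G.Adj q' q)
    (hqp : q ≠ p) {U : G.Walk q w} (hU : U.IsPath) (hw : w ∈ P₁.support)
    (hq'U : q' ∉ U.support) (hUmeet : ∀ x ∈ U.support, x ∈ P₁.support ∨ x ∈ P₂.support → x = w) :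
    G.HasInternallyDisjointPaths p q := by
  classical
  have hwq' : w ≠ q' := fun h => hq'U (h ▸ U.end_mem_support)
  have hq'A : q' ∉ (P₁.takeUntil w hw).support :=
    Walk.endpoint_notMem_support_takeUntil h₁ hw hwq'.symm
  have hwP₂ : w ∈ P₂.support → w = p := fun hw₂ => (hdisj w hw hw₂).resolve_right hwq'
  have hqP₂ : q ∉ P₂.support := fun hq₂ => by
    obtain rfl := hUmeet q U.start_mem_support (.inr hq₂)
    exact hqp (hwP₂ hq₂)
  refine ⟨(P₁.takeUntil w hw).append U.reverse, P₂.concat hadj, ?_, h₂.concat hqP₂ hadj, ?_⟩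
  · refine (h₁.takeUntil hw).append_of_forall_mem hU.reverse fun x hxA hxU => ?_
    rw [Walk.support_reverse, List.mem_reverse] at hxU
    exact hUmeet x hxU (.inl (P₁.support_takeUntil_subset_support hw hxA))
  · intro x hxA hxB
    rw [Walk.support_concat, List.mem_append, List.mem_singleton] at hxB
    rcases hxB with hxP₂ | rfl
    · rw [Walk.mem_support_append_iff, Walk.support_reverse, List.mem_reverse] at hxA
      rcases hxA with hxA | hxU
      · refine .inl ((hdisj x (P₁.support_takeUntil_subset_support hw hxA) hxP₂).resolve_right ?_)
        rintro rfl
        exact hq'A hxA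
      · obtain rfl := hUmeet x hxU (.inr hxP₂)
        exact .inl (hwP₂ hxP₂)
    · exact .inr rfl

/-- Menger's theorem for two paths. -/
theorem hasInternallyDisjointPaths_of_forall_not_separates {p q : V} (hpq : 0 < G.dist p q)
    (h : ∀ c, c ≠ p → c ≠ q → ¬ G.Separates c p q) : G.HasInternallyDisjointPaths p q := by
  classical
  obtain ⟨ℓ, hℓ⟩ : ∃ ℓ, G.dist p q = ℓ := ⟨_, rfl⟩
  induction ℓ, (hℓ ▸ hpq : 1 ≤ ℓ) using Nat.le_induction generalizing q with
  | base =>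
    have hadj := dist_eq_one_iff_adj.mp hℓ
    refine ⟨hadj.toWalk, hadj.toWalk, .of_adj hadj, .of_adj hadj, fun x hx _ => ?_⟩
    simpa using hx
  | succ ℓ hℓ1 ih =>
    obtain ⟨q', hadj, hq'⟩ := exists_adj_dist_eq_of_dist_eq_succ hℓ
    have hq'p : q' ≠ p := by rintro rfl; simp at hq'; omega
    have hqp : q ≠ p := by rintro rfl; simp at hℓ
    have h' : ∀ c, c ≠ p → c ≠ q' → ¬ G.Separates c p q' := by
      intro c hcp hcq' hc
      by_cases hcq : c = q
      · obtain ⟨W, hW⟩ :=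
          (Reachable.of_dist_ne_zero (by omega : G.dist p q' ≠ 0)).exists_walk_length_eq_dist
        exact W.notMem_support_of_length_lt_dist (by omega) (hcq ▸ hc W)
      · obtain ⟨W, hW⟩ := not_forall.mp (h c hcp hcq)
        have := hc (W.concat hadj.symm)
        rw [Walk.support_concat, List.mem_append, List.mem_singleton] at this
        tauto
    obtain ⟨P₁, P₂, h₁, h₂, hdisj⟩ := ih (by omega) h' hq'
    obtain ⟨W, hW⟩ := not_forall.mp (h q' hq'p hadj.ne)
    obtain ⟨w, hw, U, hU⟩ := W.reverse.exists_walk_to_first_mem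
      {x | x ∈ P₁.support ∨ x ∈ P₂.support} (.inl P₁.start_mem_support)
    have hq'U : q' ∉ U.bypass.support := fun hq' => by
      have := (hU q' (U.support_bypass_subset_support hq')).1
      rw [Walk.support_reverse, List.mem_reverse] at this
      exact hW this
    have hUmeet : ∀ x ∈ U.bypass.support, x ∈ P₁.support ∨ x ∈ P₂.support → x = w :=
      fun x hx => (hU x (U.support_bypass_subset_support hx)).2
    rcases hw with hw | hw
    · exact .of_graft h₁ h₂ hdisj hadj hqp U.bypass_isPath hw hq'U hUmeet
    · exact .of_graft h₂ h₁ (fun x hx₂ hx₁ => hdisj x hx₁ hx₂) hadj hqp U.bypass_isPath hw hq'U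
        fun x hx hx' => hUmeet x hx hx'.symm

theorem HasInternallyDisjointPaths.exists_isCycle {p q : V} (h : G.HasInternallyDisjointPaths p q)
    (hpq : 2 ≤ G.dist p q) :
    ∃ (v : V) (C : G.Walk v v), C.IsCycle ∧ 2 * G.dist p q ≤ C.length := by
  obtain ⟨P₁, P₂, h₁, h₂, hdisj⟩ := h
  have hl₁ := dist_le P₁
  have hl₂ := dist_le P₂
  refine ⟨p, P₁.append P₂.reverse, h₁.isCycle_append h₂.reverse ?_ (.inl (by omega)), ?_⟩
  · intro x hx₁ hx₂
    have hxp : x ≠ p := by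
      rintro rfl
      exact (List.nodup_cons.mp (P₁.cons_tail_support ▸ h₁.support_nodup)).1 hx₁
    have hxq : x ≠ q := by
      rintro rfl
      exact (List.nodup_cons.mp (P₂.reverse.cons_tail_support ▸ h₂.reverse.support_nodup)).1 hx₂
    have hx₂' := List.mem_of_mem_tail hx₂
    rw [Walk.support_reverse, List.mem_reverse] at hx₂'
    rcases hdisj x (List.mem_of_mem_tail hx₁) hx₂' with rfl | rfl <;> contradiction
  · rw [Walk.length_append, Walk.length_reverse]
    omega

end SimpleGraph

section Eccentricity

variable {V : Type*} [Fintype V] (G : SimpleGraph V)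

theorem dist_le_ecc (u v : V) : G.dist u v ≤ ecc G u :=
  Finset.le_sup (Finset.mem_univ v)

theorem exists_dist_eq_ecc [Nonempty V] (u : V) : ∃ v, G.dist u v = ecc G u := by
  obtain ⟨v, -, hv⟩ := Finset.exists_mem_eq_sup Finset.univ Finset.univ_nonempty (G.dist u)
  exact ⟨v, hv.symm⟩

theorem ecc_le_diamG (u : V) : ecc G u ≤ diamG G :=
  Finset.le_sup (Finset.mem_univ u)

theorem rad_le_ecc (u : V) : rad G ≤ ecc G u :=
  Nat.sInf_le ⟨u, rfl⟩

theorem exists_ecc_eq_rad [Nonempty V] : ∃ u, ecc G u = rad G :=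
  Nat.sInf_mem (Set.range_nonempty _)

end Eccentricity

/-- A finite connected graph with diameter d ≤ 2r - 2 (r the radius) contains a
cycle of length at least 4r - 2d. -/
theorem stmt_0 {V : Type*} [Fintype V] (G : SimpleGraph V) (hconn : G.Connected)
    (r d : ℕ) (hr : r = rad G) (hd : d = diamG G) (h : d + 2 ≤ 2 * r) :
    ∃ (v : V) (c : G.Walk v v), c.IsCycle ∧ 4 * r - 2 * d ≤ c.length := by
  have := hconn.nonempty
  obtain ⟨z, hz⟩ := exists_ecc_eq_rad G
  obtain ⟨x, hzx⟩ := exists_dist_eq_ecc G z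
  have hzx_ne : z ≠ x := by
    rintro rfl
    simp only [dist_self] at hzx
    omega
  obtain ⟨c, hcz, hc, hc_closest⟩ := exists_separates_forall_not_separates (hconn z x) hzx_ne
  obtain ⟨y, hcy⟩ := exists_dist_eq_ecc G c
  have hr_cy : r ≤ G.dist c y := hr ▸ hcy ▸ rad_le_ecc G c
  have hzy : ¬ G.Separates c z y := fun hsep => by
    have := hsep.dist_eq_add (hconn z y)
    have := dist_le_ecc G z y
    have := (hconn z c).pos_dist_of_ne hcz.symm
    omega
  have hyx : G.dist y c + G.dist c x ≤ d :=
    (hc.right_of_not_separates hzy).dist_eq_add (hconn y x) ▸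
      (dist_le_ecc G y x).trans (hd ▸ ecc_le_diamG G y)
  have hzc : 2 * r - d ≤ G.dist z c := by
    have := hc.dist_eq_add (hconn z x)
    have : G.dist y c = G.dist c y := dist_comm
    omega
  obtain ⟨v, C, hC, hlen⟩ :=
    (hasInternallyDisjointPaths_of_forall_not_separates (by omega) hc_closest).exists_isCycle
      (by omega)
  exact ⟨v, C, hC, by omega⟩
end

section
/- Let G be a finite connected graph with radius r and diameter d, with d ≤ 2r - 2, and suppose every cycle of G has length less than 4r - 2d. Then every nonseparable subgraph B of G other than K₂ has diameter (as a subgraph, using distances within B) less than 2r - d. -/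
/-!
In a nonseparable graph other than `K₂` any two vertices `u ≠ v` lie on a common cycle. This is
proved along a walk from `v` to `u`: if `u` and `w` lie on a cycle `C` and `v` is a neighbour of `w`
off `C`, a path from `v` to `C` avoiding `w` (it exists because `w` is not a cut vertex) is an ear
of `C`, and the ear together with the arc of `C` from `w` through `u` is a cycle through `u` and
`v`. Splitting such a cycle at `u` and `v` gives two `u`–`v` walks in `B`, so
`2 dist_B(u, v) ≤ length < 4r - 2d`.
-/

open SimpleGraph

namespace SimpleGraph

variable {W : Type*} {H : SimpleGraph W} {u v w x : W}

def OnCommonCycle (H : SimpleGraph W) (u v : W) : Prop :=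
  ∃ (a : W) (c : H.Walk a a), c.IsCycle ∧ u ∈ c.support ∧ v ∈ c.support

lemma OnCommonCycle.symm (h : H.OnCommonCycle u v) : H.OnCommonCycle v u :=
  let ⟨a, c, hc, hu, hv⟩ := h
  ⟨a, c, hc, hv, hu⟩

lemma Walk.two_mul_dist_le_length {a : W} (c : H.Walk a a) (hu : u ∈ c.support)
    (hv : v ∈ c.support) : 2 * H.dist u v ≤ c.length := by
  classical
  set c' := c.rotate u hu
  have hv' : v ∈ c'.support := (c.mem_support_rotate_iff u hu).mpr hv
  have h₁ := dist_le (c'.takeUntil v hv')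
  have h₂ := dist_le (c'.dropUntil v hv')
  rw [dist_comm] at h₂
  calc 2 * H.dist u v ≤ (c'.takeUntil v hv').length + (c'.dropUntil v hv').length := by omega
    _ = c.length := by rw [← Walk.length_append, c'.take_spec hv', c.length_rotate]

lemma exists_isPath_avoiding_of_not_isCutVertex (hw : ¬ IsCutVertex H w) (hu : u ≠ w)
    (hv : v ≠ w) : ∃ p : H.Walk u v, p.IsPath ∧ w ∉ p.support := by
  classical
  obtain ⟨p⟩ := (not_not.mp hw).preconnected ⟨u, hu⟩ ⟨v, hv⟩
  set q := p.map (Embedding.induce {x | x ≠ w}).toHom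
  refine ⟨q.bypass, q.bypass_isPath, fun hwq => ?_⟩
  have hwq' : w ∈ q.support := q.support_bypass_subset_support hwq
  obtain ⟨y, -, hy⟩ := List.mem_map.mp (Walk.support_map _ _ ▸ hwq')
  exact y.2 hy

lemma Preconnected.eq_or_eq_of_forall_adj (hconn : H.Preconnected)
    (hu : ∀ z, H.Adj u z → z = v) (hv : ∀ z, H.Adj v z → z = u) (z : W) :
    z = u ∨ z = v := by
  suffices ∀ {a} (q : H.Walk a z), (a = u ∨ a = v) → z = u ∨ z = v from
    this (hconn u z).some (.inl rfl)
  intro a q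
  induction q with
  | nil => exact id
  | @cons a b _ hab _ ih =>
    rintro (rfl | rfl)
    exacts [ih (.inr (hu _ hab)), ih (.inl (hv _ hab))]

lemma nonempty_iso_top_fin_two (huv : H.Adj u v) (hall : ∀ z, z = u ∨ z = v) :
    Nonempty (H ≃g (⊤ : SimpleGraph (Fin 2))) := by
  classical
  have hH : H = ⊤ := by
    ext a b
    rcases hall a with rfl | rfl <;> rcases hall b with rfl | rfl <;>
      simp [huv, huv.symm, huv.ne, huv.ne']
  have hbij : Function.Bijective fun z => if z = u then (0 : Fin 2) else 1 := by
    refine ⟨fun a b hab => ?_, fun i => ?_⟩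
    · rcases hall a with rfl | rfl <;> rcases hall b with rfl | rfl <;> simp_all [huv.ne']
    · fin_cases i
      exacts [⟨u, by simp⟩, ⟨v, by simp [huv.ne']⟩]
  subst hH
  exact ⟨Iso.completeGraph (Equiv.ofBijective _ hbij)⟩

lemma onCommonCycle_of_adj_of_adj (hv : ¬ IsCutVertex H v) (huv : H.Adj u v)
    (hvw : H.Adj v w) (hwu : w ≠ u) : H.OnCommonCycle u v := by
  obtain ⟨p, -, hvp⟩ := exists_isPath_avoiding_of_not_isCutVertex hv huv.ne hvw.ne'
  have hreach : (H.deleteEdges {s(u, v)}).Reachable u v := by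
    refine reachable_deleteEdges_iff_exists_walk.mpr ⟨p.concat hvw.symm, fun he => ?_⟩
    simp only [Walk.edges_concat, List.concat_eq_append, List.mem_append,
      List.mem_singleton] at he
    rcases he with he | he
    · exact hvp (p.snd_mem_support_of_mem_edges he)
    · rcases Sym2.eq_iff.mp he with ⟨rfl, -⟩ | ⟨rfl, -⟩
      exacts [hwu rfl, huv.ne rfl]
  obtain ⟨a, c, hc, he⟩ := adj_and_reachable_delete_edges_iff_exists_cycle.mp ⟨huv, hreach⟩
  exact ⟨a, c, hc, c.fst_mem_support_of_mem_edges he, c.snd_mem_support_of_mem_edges he⟩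

lemma onCommonCycle_of_adj (hconn : H.Preconnected) (hcut : ∀ w, ¬ IsCutVertex H w)
    (hK2 : ¬ Nonempty (H ≃g (⊤ : SimpleGraph (Fin 2)))) (huv : H.Adj u v) :
    H.OnCommonCycle u v := by
  by_cases hv : ∃ w, H.Adj v w ∧ w ≠ u
  · obtain ⟨w, hvw, hwu⟩ := hv
    exact onCommonCycle_of_adj_of_adj (hcut v) huv hvw hwu
  by_cases hu : ∃ w, H.Adj u w ∧ w ≠ v
  · obtain ⟨w, huw, hwv⟩ := hu
    exact (onCommonCycle_of_adj_of_adj (hcut u) huv.symm huw hwv).symm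
  push Not at hu hv
  exact absurd (nonempty_iso_top_fin_two huv (hconn.eq_or_eq_of_forall_adj hu hv)) hK2

lemma Walk.IsCycle.exists_isPath_subset_support {C : H.Walk w w} (hC : C.IsCycle)
    (hx : x ∈ C.support) (hxw : x ≠ w) (hu : u ∈ C.support) :
    ∃ S : H.Walk w x, S.IsPath ∧ S.support ⊆ C.support ∧ u ∈ S.support := by
  classical
  have hT : (C.takeUntil x hx).IsPath := hC.isPath_takeUntil hx
  have hTD : ((C.takeUntil x hx).append (C.dropUntil x hx)).IsCycle := by rwa [C.take_spec hx]
  have hD : (C.dropUntil x hx).IsPath := hTD.isPath_of_append_right (Walk.not_nil_of_ne hxw.symm)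
  rw [← C.take_spec hx, Walk.mem_support_append_iff] at hu
  rcases hu with hu | hu
  · exact ⟨_, hT, C.support_takeUntil_subset_support hx, hu⟩
  · refine ⟨_, hD.reverse, ?_, by simpa using hu⟩
    simpa using C.support_dropUntil_subset_support hx

lemma Walk.IsCycle.onCommonCycle_of_ear {C : H.Walk w w} (hC : C.IsCycle) (hu : u ∈ C.support)
    (hx : x ∈ C.support) (hxw : x ≠ w) {P : H.Walk x w} (hP : P.IsPath) (hPlen : 1 < P.length)
    (hPC : ∀ y ∈ P.support, y ∈ C.support → y = x ∨ y = w) (hv : v ∈ P.support) :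
    H.OnCommonCycle u v := by
  obtain ⟨S, hS, hSC, huS⟩ := hC.exists_isPath_subset_support hx hxw hu
  have hdisj : S.support.tail.Disjoint P.support.tail := by
    intro y hyS hyP
    have hyw : y ≠ w := by
      rintro rfl
      exact (List.nodup_cons.mp (S.cons_tail_support ▸ hS.support_nodup)).1 hyS
    have hyx : y ≠ x := by
      rintro rfl
      exact (List.nodup_cons.mp (P.cons_tail_support ▸ hP.support_nodup)).1 hyP
    exact (hPC y (List.mem_of_mem_tail hyP) (hSC (List.mem_of_mem_tail hyS))).elim hyx hyw
  refine ⟨w, S.append P, hS.isCycle_append hP hdisj (.inr hPlen), ?_, ?_⟩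
  · exact (S.mem_support_append_iff P).mpr (.inl huS)
  · exact (S.mem_support_append_iff P).mpr (.inr hv)

lemma OnCommonCycle.of_adj (hC : H.OnCommonCycle u w) (hw : ¬ IsCutVertex H w) (huw : u ≠ w)
    (hvw : H.Adj v w) : H.OnCommonCycle u v := by
  classical
  obtain ⟨a, C₀, hC₀, hu₀, hw₀⟩ := hC
  set C := C₀.rotate w hw₀
  have hC : C.IsCycle := hC₀.rotate hw₀
  have hu : u ∈ C.support := (C₀.mem_support_rotate_iff w hw₀).mpr hu₀
  by_cases hvC : v ∈ C.support
  · exact ⟨w, C, hC, hu, hvC⟩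
  obtain ⟨Q, hQ, hwQ⟩ := exists_isPath_avoiding_of_not_isCutVertex hw hvw.ne huw
  obtain ⟨x, hxC, hxQ, hfirst⟩ :=
    Q.exists_mem_support_forall_mem_support_imp_eq C.support.toFinset ⟨u, by simp [hu]⟩
  rw [List.mem_toFinset] at hxC
  set R := Q.takeUntil x hxQ
  have hwR : w ∉ R.support := fun h => hwQ (Q.support_takeUntil_subset_support hxQ h)
  have hxw : x ≠ w := fun h => hwR (h ▸ R.end_mem_support)
  have hRpos : 0 < R.length := by
    refine Nat.pos_of_ne_zero fun h => hvC ?_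
    rwa [Walk.eq_of_length_eq_zero h]
  refine hC.onCommonCycle_of_ear hu hxC hxw (P := R.reverse.concat hvw)
    ((hQ.takeUntil hxQ).reverse.concat (by simpa using hwR) hvw) (by simpa using hRpos) ?_
    (by simp)
  intro y hyP hyC
  rw [Walk.support_concat, List.mem_append, Walk.support_reverse,
    List.mem_reverse, List.mem_singleton] at hyP
  exact hyP.imp (fun hyR => hfirst y (List.mem_toFinset.mpr hyC) hyR) id

theorem Preconnected.onCommonCycle (hconn : H.Preconnected) (hcut : ∀ w, ¬ IsCutVertex H w)
    (hK2 : ¬ Nonempty (H ≃g (⊤ : SimpleGraph (Fin 2)))) (huv : u ≠ v) :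
    H.OnCommonCycle u v := by
  obtain ⟨p⟩ := hconn v u
  induction p with
  | nil => exact absurd rfl huv
  | @cons v w u hvw q ih =>
    obtain rfl | hwu := eq_or_ne w u
    · exact (onCommonCycle_of_adj hconn hcut hK2 hvw).symm
    · exact (ih hwu.symm).of_adj (hcut w) hwu.symm hvw

end SimpleGraph

theorem stmt_4_general {V : Type*} (G : SimpleGraph V)
    (r d : ℕ) (h : d + 2 ≤ 2 * r)
    (hcyc : ∀ (v : V) (c : G.Walk v v), c.IsCycle → c.length + 2 * d < 4 * r)
    (B : G.Subgraph) (hBconn : B.coe.Connected)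
    (hBnosep : ∀ v : B.verts, ¬ IsCutVertex B.coe v)
    (hK2 : ¬ Nonempty (B.coe ≃g (⊤ : SimpleGraph (Fin 2)))) :
    ∀ u v : B.verts, B.coe.dist u v + d < 2 * r := by
  intro u v
  obtain rfl | huv := eq_or_ne u v
  · rw [dist_self]
    omega
  obtain ⟨a, c, hc, hu, hv⟩ := hBconn.preconnected.onCommonCycle hBnosep hK2 huv
  have hdist := c.two_mul_dist_le_length hu hv
  have hlen := hcyc _ (c.map B.hom) (hc.map Subgraph.hom_injective)
  rw [Walk.length_map] at hlen
  omega

/-- If d ≤ 2r - 2 and every cycle of G has length < 4r - 2d, then every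
nonseparable subgraph B of G other than K₂ has diameter (within B) < 2r - d. -/
theorem stmt_4 {V : Type*} [Fintype V] (G : SimpleGraph V) (hconn : G.Connected)
    (r d : ℕ) (hr : r = rad G) (hd : d = diamG G) (h : d + 2 ≤ 2 * r)
    (hcyc : ∀ (v : V) (c : G.Walk v v), c.IsCycle → c.length + 2 * d < 4 * r)
    (B : G.Subgraph) (hBconn : B.coe.Connected) (hBnontriv : B.verts.Nontrivial)
    (hBnosep : ∀ v : B.verts, ¬ IsCutVertex B.coe v)
    (hK2 : ¬ Nonempty (B.coe ≃g (⊤ : SimpleGraph (Fin 2)))) :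
    ∀ u v : B.verts, B.coe.dist u v + d < 2 * r :=
  stmt_4_general G r d h hcyc B hBconn hBnosep hK2
end
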